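/- For every 0 < α < 1 such that (1−α)·det 𝓑(α) + Σ_{j=1}^m det 𝓑^j(α) ≠ 0, one has Q_τ(α) = (det 𝓑(α) − Σ_{k=1}^m det 𝓑_k(α)) / ((1−α)·det 𝓑(α) + Σ_{j=1}^m det 𝓑^j(α)). -/

import Mathlib

/-!
Gambling teams, discounted by `α`. For each pattern `Bⱼ` a team bets on the successive letters
of `Bⱼ`, a new gambler joining at every round; the gambler who joined `k` rounds ago and has won
every bet holds `1 / (Pr(Bⱼ_{(k)}) αᵏ)`. The bets are fair, so the expected discounted capital of
the team when the game stops at `τ` is its initial capital `(A∗Bⱼ)(α)` plus the stakes `αⁿ`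
brought in at the rounds `n < τ`, that is `(A∗Bⱼ)(α) + Q_τ(α)`. On `{τ = τᵢ}` the pattern `Bᵢ`
is a suffix of the observed word, so the capital is then exactly `α^τ (Bᵢ∗Bⱼ)(α)`. With
`gᵢ = E(α^τ; τ = τᵢ)` this gives `𝓑(α) g = (A∗B)(α) + Q_τ(α) 𝟙`, while
`∑ᵢ gᵢ = E α^τ = 1 - (1 - α) Q_τ(α)`; Cramer's rule turns these `m + 1` equations into the
formula.
-/

open MeasureTheory ProbabilityTheory Finset

/-- The probability `Pr(C)` of a pattern (word) `C`, with letter distribution `p`. -/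
def patProb {S : Type*} (p : S → ℝ) (C : List S) : ℝ := (C.map p).prod

/-- `lastK C k` is the pattern `C^(k)` formed by the last `k` letters of `C`. -/
def lastK {S : Type*} (C : List S) (k : ℕ) : List S := C.drop (C.length - k)

/-- The correlation function `(A ∗ B)(α)`. -/
noncomputable def corr {S : Type*} [DecidableEq S] (p : S → ℝ) (A B : List S) (α : ℝ) : ℝ :=
  ∑ k ∈ Finset.Icc 1 (min A.length B.length),
    (if lastK A k = List.take k B then (1 : ℝ) else 0) / (patProb p (List.take k B) * α ^ k)

/-- The word `a₁…a_{l-1}ξ₀ξ₁…ξ_k = A ++ ξ₁…ξ_k` observed at time `k` (here `ξ i` denotes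
the `(i+1)`-st letter generated by the casino, and `ξ₀` is the last letter of `A`). -/
def obsWord {S : Type*} {Ω : Type*} (A : List S) (ξ : ℕ → Ω → S) (k : ℕ) (ω : Ω) : List S :=
  A ++ List.ofFn fun i : Fin k => ξ i ω

/-- The stopping time `τ_{AB}`: the least `k ≥ 0` such that `B` is a contiguous subpattern of
`a₁…a_{l-1}ξ₀ξ₁…ξ_k` (with `ξ₀ = a_l`). -/
noncomputable def hitTime {S : Type*} {Ω : Type*} (A B : List S) (ξ : ℕ → Ω → S) (ω : Ω) : ℕ :=
  sInf {k : ℕ | B <:+: obsWord A ξ k ω}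


/-- The stopping time `τ_{A𝔅} = min_{1 ≤ i ≤ m} τ_{AB_i}`. -/
noncomputable def hitTimeMin {S : Type*} {Ω : Type*} {m : ℕ} (A : List S) (Bs : Fin m → List S)
    (ξ : ℕ → Ω → S) (ω : Ω) : ℕ :=
  ⨅ i : Fin m, hitTime A (Bs i) ξ ω

/-- The generating function `g_τ^j(α) = E(α^τ · 1_{{τ = τ_j}})`. -/
noncomputable def gGF {S : Type*} {Ω : Type*} [MeasurableSpace Ω] (μ : Measure Ω) {m : ℕ}
    (A : List S) (Bs : Fin m → List S) (ξ : ℕ → Ω → S) (j : Fin m) (α : ℝ) : ℝ :=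
  ∫ ω, (if hitTimeMin A Bs ξ ω = hitTime A (Bs j) ξ ω then α ^ hitTimeMin A Bs ξ ω else 0) ∂μ

/-- The generating function `Q_τ(α) = (1 - E(α^τ))/(1-α)`. -/
noncomputable def QGF {S : Type*} {Ω : Type*} [MeasurableSpace Ω] (μ : Measure Ω) {m : ℕ}
    (A : List S) (Bs : Fin m → List S) (ξ : ℕ → Ω → S) (α : ℝ) : ℝ :=
  (1 - ∫ ω, α ^ hitTimeMin A Bs ξ ω ∂μ) / (1 - α)


/-- The matrix `𝓑(α) = ((B_j∗B_i)(α))_{1≤i,j≤m}`. -/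
noncomputable def corrMat {S : Type*} [DecidableEq S] (p : S → ℝ) {m : ℕ}
    (Bs : Fin m → List S) (α : ℝ) : Matrix (Fin m) (Fin m) ℝ :=
  Matrix.of fun i j => corr p (Bs j) (Bs i) α

/-- The column vector `((A∗B_i)(α))_{1≤i≤m}`. -/
noncomputable def corrCol {S : Type*} [DecidableEq S] (p : S → ℝ) (A : List S) {m : ℕ}
    (Bs : Fin m → List S) (α : ℝ) : Fin m → ℝ :=
  fun i => corr p A (Bs i) α

open Filter Topology

lemma sum_Icc_one_eq_sum_range {M : Type*} [AddCommMonoid M] (g : ℕ → M) (L : ℕ) :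
    ∑ k ∈ Icc 1 L, g k = ∑ k ∈ range L, g (k + 1) := by
  rw [range_eq_Ico, sum_Ico_add' g 0 L 1, zero_add, Ico_add_one_right_eq_Icc]

section Words

variable {S : Type*}

lemma lastK_suffix (C : List S) (k : ℕ) : lastK C k <:+ C := List.drop_suffix _ _

lemma length_lastK (C : List S) (k : ℕ) : (lastK C k).length = min k C.length := by
  simp only [lastK, List.length_drop]; omega

lemma lastK_zero (C : List S) : lastK C 0 = [] := by simp [lastK]

lemma lastK_append_singleton (w : List S) (x : S) (k : ℕ) :
    lastK (w ++ [x]) (k + 1) = lastK w k ++ [x] := by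
  rw [lastK, lastK, List.drop_append_of_le_length (by simp)]
  congr 2
  simp

lemma lastK_of_isSuffix {u w : List S} (h : u <:+ w) {k : ℕ} (hk : k ≤ u.length) :
    lastK w k = lastK u k := by
  obtain ⟨s, rfl⟩ := h
  have : s.length + u.length - k = s.length + (u.length - k) := by omega
  simp [lastK, this, List.drop_append]

lemma lastK_ne_take_of_length_lt {C B : List S} {k : ℕ} (hC : C.length < k) (hB : k ≤ B.length) :
    lastK C k ≠ B.take k := fun h => by
  have := congrArg List.length h
  rw [length_lastK, List.length_take] at this
  omega

lemma isSuffix_of_isInfix_of_not_isInfix_dropLast {A B : List S} (h : B <:+: A)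
    (hB : ¬ B <:+: A.dropLast) : B <:+ A := by
  rcases A.eq_nil_or_concat' with rfl | ⟨A', a, rfl⟩
  · rw [List.infix_nil.mp h]
  · rw [List.dropLast_concat] at hB
    exact (List.infix_concat_iff.mp h).resolve_right hB

lemma patProb_pos {p : S → ℝ} (hp : ∀ a, 0 < p a) (w : List S) : 0 < patProb p w :=
  List.prod_pos (by simp [hp])

variable [DecidableEq S]

lemma corr_eq_sum_Icc_length (p : S → ℝ) (C B : List S) (α : ℝ) :
    corr p C B α = ∑ k ∈ Icc 1 B.length,
      (if lastK C k = B.take k then (1 : ℝ) else 0) / (patProb p (B.take k) * α ^ k) := by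
  refine Finset.sum_subset (Finset.Icc_subset_Icc le_rfl (min_le_right _ _)) fun k hk hk' => ?_
  simp only [Finset.mem_Icc] at hk hk'
  rw [if_neg (lastK_ne_take_of_length_lt (by omega) hk.2), zero_div]

end Words

section Observation

variable {S Ω : Type*} {A : List S} {ξ : ℕ → Ω → S}

lemma obsWord_zero (ω : Ω) : obsWord A ξ 0 ω = A := by simp [obsWord]

lemma obsWord_succ (n : ℕ) (ω : Ω) : obsWord A ξ (n + 1) ω = obsWord A ξ n ω ++ [ξ n ω] := by
  rw [obsWord, obsWord, List.ofFn_succ']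
  simp [List.concat_eq_append]

lemma isInfix_obsWord_mono {B : List S} (ω : Ω) :
    Monotone fun n => B <:+: obsWord A ξ n ω :=
  monotone_nat_of_le_succ fun n h => by
    rw [obsWord_succ]; exact h.trans (List.prefix_append _ _).isInfix

lemma isSuffix_obsWord_succ_of_not_isInfix {B : List S} {n : ℕ} {ω : Ω}
    (hn : ¬ B <:+: obsWord A ξ n ω) (hn' : B <:+: obsWord A ξ (n + 1) ω) :
    B <:+ obsWord A ξ (n + 1) ω := by
  rw [obsWord_succ] at hn' ⊢
  exact (List.infix_concat_iff.mp hn').resolve_right hn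

def prefixTuple (ξ : ℕ → Ω → S) (n : ℕ) (ω : Ω) : Fin n → S := fun i => ξ i ω

def spellsAt (ξ : ℕ → Ω → S) (n : ℕ) (w : List S) : Set Ω :=
  {ω | (List.ofFn fun i : Fin w.length => ξ (n + i) ω) = w}

lemma spellsAt_cons (n : ℕ) (b : S) (w : List S) :
    spellsAt ξ n (b :: w) = ξ n ⁻¹' {b} ∩ spellsAt ξ (n + 1) w := by
  ext ω
  simp [spellsAt, List.ofFn_succ, Nat.add_assoc, Nat.add_comm 1]

lemma isInfix_obsWord_of_mem_spellsAt {A B : List S} {n : ℕ} {ω : Ω} (h : ω ∈ spellsAt ξ n B) :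
    B <:+: obsWord A ξ (n + B.length) ω := by
  have hblock : (List.ofFn fun i : Fin B.length => ξ (i.natAdd n) ω) = B := h
  rw [obsWord, List.ofFn_add, hblock, ← List.append_assoc]
  exact (List.suffix_append _ B).isInfix

end Observation

section Events

variable {S Ω : Type*} (A : List S) {m : ℕ} (Bs : Fin m → List S) (ξ : ℕ → Ω → S)

/-- The event `{τ ≤ n}` (up to the junk value of `hitTime` for patterns that never occur). -/
def someOccurs (n : ℕ) : Set Ω := {ω | ∃ i, Bs i <:+: obsWord A ξ n ω}

def firstOccAt : ℕ → Set Ω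
  | 0 => someOccurs A Bs ξ 0
  | n + 1 => someOccurs A Bs ξ (n + 1) \ someOccurs A Bs ξ n

/-- The event `{τ = τᵢ = n}`. -/
def winsAt (i : Fin m) (n : ℕ) : Set Ω := firstOccAt A Bs ξ n ∩ {ω | Bs i <:+: obsWord A ξ n ω}

/-- The gambler who started betting on `B` exactly `k` rounds before time `n` has not lost yet. -/
def prefixMatch (B : List S) (n k : ℕ) : Set Ω := {ω | lastK (obsWord A ξ n ω) k = B.take k}

variable {A Bs ξ}

lemma someOccurs_mono : Monotone (someOccurs A Bs ξ) := fun _ _ h _ ⟨i, hi⟩ =>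
  ⟨i, isInfix_obsWord_mono _ h hi⟩

lemma prefixMatch_zero_right (B : List S) (n : ℕ) : prefixMatch A ξ B n 0 = Set.univ := by
  simp [prefixMatch, lastK_zero]

lemma prefixMatch_zero_left (B : List S) (k : ℕ) :
    prefixMatch A ξ B 0 k = {_ω | lastK A k = B.take k} := by
  simp [prefixMatch, obsWord_zero]

lemma prefixMatch_succ {B : List S} {k : ℕ} (hk : k < B.length) (n : ℕ) :
    prefixMatch A ξ B (n + 1) (k + 1) = prefixMatch A ξ B n k ∩ ξ n ⁻¹' {B[k]} := by
  ext ω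
  simp only [prefixMatch, Set.mem_ofPred_eq, Set.mem_inter_iff, Set.mem_preimage,
    Set.mem_singleton_iff, obsWord_succ, lastK_append_singleton, List.take_add_one,
    List.getElem?_eq_getElem hk, Option.toList_some, List.append_singleton_inj]

lemma prefixMatch_length_subset_someOccurs (j : Fin m) (n : ℕ) :
    prefixMatch A ξ (Bs j) n (Bs j).length ⊆ someOccurs A Bs ξ n := fun ω hω =>
  ⟨j, by
    rw [prefixMatch, Set.mem_ofPred_eq, List.take_length] at hω
    exact (hω ▸ lastK_suffix _ _).isInfix⟩

lemma isSuffix_of_mem_winsAt (hBA : ∀ i, ¬ Bs i <:+: A.dropLast) {i : Fin m} {n : ℕ} {ω : Ω}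
    (hω : ω ∈ winsAt A Bs ξ i n) : Bs i <:+ obsWord A ξ n ω := by
  obtain ⟨hfirst, hocc⟩ := hω
  cases n with
  | zero =>
    rw [Set.mem_ofPred_eq, obsWord_zero] at hocc
    rw [obsWord_zero]
    exact isSuffix_of_isInfix_of_not_isInfix_dropLast hocc (hBA i)
  | succ n => exact isSuffix_obsWord_succ_of_not_isInfix (fun h => hfirst.2 ⟨i, h⟩) hocc

lemma pairwise_disjoint_winsAt (hsub : ∀ i j, i ≠ j → ¬ Bs i <:+: Bs j)
    (hBA : ∀ i, ¬ Bs i <:+: A.dropLast) (n : ℕ) :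
    Pairwise fun i j => Disjoint (winsAt A Bs ξ i n) (winsAt A Bs ξ j n) := by
  refine fun i j hij => Set.disjoint_left.mpr fun ω hi hj => ?_
  rcases List.suffix_or_suffix_of_suffix (isSuffix_of_mem_winsAt hBA hi)
    (isSuffix_of_mem_winsAt hBA hj) with h | h
  · exact hsub i j hij h.isInfix
  · exact hsub j i hij.symm h.isInfix

lemma firstOccAt_subset_someOccurs (n : ℕ) : firstOccAt A Bs ξ n ⊆ someOccurs A Bs ξ n := by
  cases n
  exacts [subset_rfl, Set.sdiff_subset]

lemma compl_someOccurs_eq_union (n : ℕ) :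
    (someOccurs A Bs ξ n)ᶜ = (someOccurs A Bs ξ (n + 1))ᶜ ∪ firstOccAt A Bs ξ (n + 1) := by
  ext ω
  have hmono : ω ∈ someOccurs A Bs ξ n → ω ∈ someOccurs A Bs ξ (n + 1) :=
    fun h => someOccurs_mono n.le_succ h
  simp only [firstOccAt, Set.mem_compl_iff, Set.mem_union, Set.mem_sdiff]
  tauto

lemma iUnion_winsAt (n : ℕ) : ⋃ i, winsAt A Bs ξ i n = firstOccAt A Bs ξ n := by
  refine subset_antisymm (Set.iUnion_subset fun i => Set.inter_subset_left) fun ω hω => ?_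
  obtain ⟨i, hi⟩ := firstOccAt_subset_someOccurs n hω
  exact Set.mem_iUnion.mpr ⟨i, hω, hi⟩

lemma inter_prefixMatch_of_isSuffix [DecidableEq S] {B C : List S} {n : ℕ} {E : Set Ω}
    (hE : ∀ ω ∈ E, C <:+ obsWord A ξ n ω) (hCB : C <:+: B → C = B) {k : ℕ} (hk : k ≤ B.length) :
    E ∩ prefixMatch A ξ B n k = if lastK C k = B.take k then E else ∅ := by
  by_cases hkC : k ≤ C.length
  · have hmatch : ∀ ω ∈ E, ω ∈ prefixMatch A ξ B n k ↔ lastK C k = B.take k := fun ω hω => by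
      rw [prefixMatch, Set.mem_ofPred_eq, lastK_of_isSuffix (hE ω hω) hkC]
    split_ifs with h
    · exact Set.inter_eq_left.mpr fun ω hω => (hmatch ω hω).mpr h
    · exact Set.eq_empty_of_forall_notMem fun ω ⟨hω, hm⟩ => h ((hmatch ω hω).mp hm)
  · rw [if_neg (lastK_ne_take_of_length_lt (by omega) hk)]
    refine Set.eq_empty_of_forall_notMem fun ω ⟨hω, hm⟩ => ?_
    have hsuf := hE ω hω
    have hCk : C <:+ lastK (obsWord A ξ n ω) k :=
      List.suffix_of_suffix_length_le hsuf (lastK_suffix _ k) (by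
        rw [length_lastK]; have := hsuf.length_le; omega)
    rw [show lastK (obsWord A ξ n ω) k = B.take k from hm] at hCk
    have := congrArg List.length (hCB (hCk.isInfix.trans (List.take_prefix k B).isInfix))
    omega

end Events

section Independence

variable {S Ω : Type*} [MeasurableSpace S] [MeasurableSpace Ω] {μ : Measure Ω} {ξ : ℕ → Ω → S}

lemma measurable_prefixTuple (hmeas : ∀ n, Measurable (ξ n)) (n : ℕ) :
    Measurable (prefixTuple ξ n) :=
  measurable_pi_lambda _ fun i => hmeas i

lemma indepFun_prefixTuple (hmeas : ∀ n, Measurable (ξ n)) (hindep : iIndepFun ξ μ) (n : ℕ) :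
    IndepFun (prefixTuple ξ n) (ξ n) μ :=
  (hindep.indepFun_finset (Finset.range n) {n} (by simp) hmeas).comp
    (φ := fun (v : Finset.range n → S) (i : Fin n) => v ⟨i, Finset.mem_range.mpr i.isLt⟩)
    (ψ := fun (v : ({n} : Finset ℕ) → S) => v ⟨n, Finset.mem_singleton_self n⟩)
    (measurable_pi_lambda _ fun _ => measurable_pi_apply _) (measurable_pi_apply _)

variable [Countable S] [MeasurableSingletonClass S]

lemma measurableSet_preimage_prefixTuple (hmeas : ∀ n, Measurable (ξ n)) {n : ℕ}
    (U : Set (Fin n → S)) : MeasurableSet (prefixTuple ξ n ⁻¹' U) :=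
  measurable_prefixTuple hmeas n MeasurableSet.of_discrete

lemma measurableSet_prefixMatch (hmeas : ∀ n, Measurable (ξ n)) (A B : List S) (n k : ℕ) :
    MeasurableSet (prefixMatch A ξ B n k) :=
  measurableSet_preimage_prefixTuple hmeas {v | lastK (A ++ List.ofFn v) k = B.take k}

lemma measurableSet_someOccurs (hmeas : ∀ n, Measurable (ξ n)) (A : List S) {m : ℕ}
    (Bs : Fin m → List S) (n : ℕ) : MeasurableSet (someOccurs A Bs ξ n) :=
  measurableSet_preimage_prefixTuple hmeas {v | ∃ i, Bs i <:+: A ++ List.ofFn v}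

lemma measurableSet_firstOccAt (hmeas : ∀ n, Measurable (ξ n)) (A : List S) {m : ℕ}
    (Bs : Fin m → List S) (n : ℕ) : MeasurableSet (firstOccAt A Bs ξ n) := by
  cases n
  exacts [measurableSet_someOccurs hmeas A Bs 0,
    (measurableSet_someOccurs hmeas A Bs _).diff (measurableSet_someOccurs hmeas A Bs _)]

lemma measurableSet_winsAt (hmeas : ∀ n, Measurable (ξ n)) (A : List S) {m : ℕ}
    (Bs : Fin m → List S) (i : Fin m) (n : ℕ) : MeasurableSet (winsAt A Bs ξ i n) :=
  (measurableSet_firstOccAt hmeas A Bs n).inter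
    (measurableSet_preimage_prefixTuple hmeas {v | Bs i <:+: A ++ List.ofFn v})

lemma measurableSet_spellsAt (hmeas : ∀ n, Measurable (ξ n)) (n : ℕ) (w : List S) :
    MeasurableSet (spellsAt ξ n w) :=
  measurable_pi_lambda (fun ω (i : Fin w.length) => ξ (n + i) ω) (fun _ => hmeas _)
    (MeasurableSet.of_discrete (s := {v | List.ofFn v = w}))

variable {p : S → ℝ}

lemma measureReal_preimage_prefixTuple_inter_letter (hmeas : ∀ n, Measurable (ξ n))
    (hindep : iIndepFun ξ μ) (hlaw : ∀ n a, μ.real (ξ n ⁻¹' {a}) = p a) {n : ℕ}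
    (U : Set (Fin n → S)) (b : S) :
    μ.real (prefixTuple ξ n ⁻¹' U ∩ ξ n ⁻¹' {b}) = μ.real (prefixTuple ξ n ⁻¹' U) * p b := by
  rw [← hlaw n b, measureReal_def, measureReal_def, measureReal_def,
    (indepFun_prefixTuple hmeas hindep n).measure_inter_preimage_eq_mul _ _
      MeasurableSet.of_discrete (measurableSet_singleton b), ENNReal.toReal_mul]

lemma measureReal_preimage_prefixTuple_inter_spellsAt (hmeas : ∀ n, Measurable (ξ n))
    (hindep : iIndepFun ξ μ) (hlaw : ∀ n a, μ.real (ξ n ⁻¹' {a}) = p a) (w : List S) :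
    ∀ (n : ℕ) (U : Set (Fin n → S)),
      μ.real (prefixTuple ξ n ⁻¹' U ∩ spellsAt ξ n w) =
        μ.real (prefixTuple ξ n ⁻¹' U) * patProb p w := by
  induction w with
  | nil => intro n U; simp [spellsAt, patProb]
  | cons b w ih =>
    intro n U
    have hext : prefixTuple ξ n ⁻¹' U ∩ ξ n ⁻¹' {b} =
        prefixTuple ξ (n + 1) ⁻¹' {v | Fin.init v ∈ U ∧ v (Fin.last n) = b} :=
      Set.ext fun _ => Iff.rfl
    rw [spellsAt_cons, ← Set.inter_assoc, hext, ih, ← hext,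
      measureReal_preimage_prefixTuple_inter_letter hmeas hindep hlaw]
    simp only [patProb, List.map_cons, List.prod_cons]
    ring


lemma measure_setOf_forall_not_isInfix_obsWord [IsProbabilityMeasure μ]
    (hmeas : ∀ n, Measurable (ξ n)) (hindep : iIndepFun ξ μ)
    (hlaw : ∀ n a, μ.real (ξ n ⁻¹' {a}) = p a) (hp : ∀ a, 0 < p a) (A B : List S) :
    μ {ω | ∀ k, ¬ B <:+: obsWord A ξ k ω} = 0 := by
  set β := patProb p B
  have hβ : μ.real (spellsAt ξ 0 B) = β := by
    simpa using measureReal_preimage_prefixTuple_inter_spellsAt hmeas hindep hlaw B 0 Set.univ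
  have hβ0 : 0 < β := patProb_pos hp B
  have hβ1 : β ≤ 1 := hβ ▸ measureReal_le_one
  let F : ℕ → Set Ω := fun n => {ω | ¬ B <:+: obsWord A ξ n ω}
  have hF : ∀ n, F n = prefixTuple ξ n ⁻¹' {v | ¬ B <:+: A ++ List.ofFn v} := fun _ => rfl
  -- the next `|B|` letters spell `B` with probability `β`, independently of the past
  have hstep : ∀ n, μ.real (F (n + B.length)) ≤ (1 - β) * μ.real (F n) := by
    intro n
    have hsub : F (n + B.length) ⊆ F n \ spellsAt ξ n B := fun ω hω =>
      ⟨fun h => hω (isInfix_obsWord_mono ω (Nat.le_add_right _ _) h),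
        fun h => hω (isInfix_obsWord_of_mem_spellsAt h)⟩
    have hsplit :=
      measureReal_inter_add_sdiff (μ := μ) (s := F n) (measurableSet_spellsAt hmeas n B)
    rw [hF, measureReal_preimage_prefixTuple_inter_spellsAt hmeas hindep hlaw, ← hF] at hsplit
    linarith [measureReal_mono (μ := μ) hsub]
  have hbound : ∀ T, μ.real (F (T * B.length)) ≤ (1 - β) ^ T := by
    intro T
    induction T with
    | zero => simp
    | succ T ih =>
      calc μ.real (F ((T + 1) * B.length)) ≤ (1 - β) * μ.real (F (T * B.length)) :=
            Nat.succ_mul T B.length ▸ hstep _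
        _ ≤ (1 - β) * (1 - β) ^ T := by gcongr
        _ = (1 - β) ^ (T + 1) := by ring
  have hle : μ.real {ω | ∀ k, ¬ B <:+: obsWord A ξ k ω} ≤ 0 :=
    ge_of_tendsto' (tendsto_pow_atTop_nhds_zero_of_lt_one (by linarith) (by linarith))
      fun T => (measureReal_mono fun _ hω => by exact hω _).trans (hbound T)
  exact (measureReal_eq_zero_iff).mp (le_antisymm hle measureReal_nonneg)

lemma ae_forall_exists_isInfix_obsWord [IsProbabilityMeasure μ]
    (hmeas : ∀ n, Measurable (ξ n)) (hindep : iIndepFun ξ μ)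
    (hlaw : ∀ n a, μ.real (ξ n ⁻¹' {a}) = p a) (hp : ∀ a, 0 < p a) (A : List S) {m : ℕ}
    (Bs : Fin m → List S) : ∀ᵐ ω ∂μ, ∀ i, ∃ k, Bs i <:+: obsWord A ξ k ω :=
  ae_all_iff.mpr fun i => ae_iff.mpr <| by
    simpa only [not_exists] using
      measure_setOf_forall_not_isInfix_obsWord hmeas hindep hlaw hp A (Bs i)

end Independence

section HittingTime

variable {S Ω : Type*} {A : List S} {m : ℕ} {Bs : Fin m → List S} {ξ : ℕ → Ω → S} {ω : Ω}

lemma hitTime_le_iff {B : List S} (h : ∃ k, B <:+: obsWord A ξ k ω) (n : ℕ) :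
    hitTime A B ξ ω ≤ n ↔ B <:+: obsWord A ξ n ω :=
  ⟨fun hn => isInfix_obsWord_mono ω hn (Nat.sInf_mem h), fun hn => Nat.sInf_le hn⟩

lemma hitTimeMin_le_iff [Nonempty (Fin m)] (h : ∀ i, ∃ k, Bs i <:+: obsWord A ξ k ω) (n : ℕ) :
    hitTimeMin A Bs ξ ω ≤ n ↔ ω ∈ someOccurs A Bs ξ n := by
  obtain ⟨i, hi⟩ := exists_eq_ciInf_of_finite (f := fun i => hitTime A (Bs i) ξ ω)
  refine ⟨fun hn => ⟨i, (hitTime_le_iff (h i) n).mp (hi ▸ hn)⟩, fun ⟨j, hj⟩ => ?_⟩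
  exact (ciInf_le (OrderBot.bddBelow _) j).trans ((hitTime_le_iff (h j) n).mpr hj)

lemma hitTimeMin_eq_iff [Nonempty (Fin m)] (h : ∀ i, ∃ k, Bs i <:+: obsWord A ξ k ω) (n : ℕ) :
    hitTimeMin A Bs ξ ω = n ↔ ω ∈ firstOccAt A Bs ξ n := by
  cases n with
  | zero => rw [firstOccAt, ← hitTimeMin_le_iff h, Nat.le_zero]
  | succ n =>
    rw [firstOccAt, Set.mem_sdiff, ← hitTimeMin_le_iff h, ← hitTimeMin_le_iff h]
    omega

lemma pow_hitTimeMin_eq_tsum [Nonempty (Fin m)] (h : ∀ i, ∃ k, Bs i <:+: obsWord A ξ k ω)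
    (α : ℝ) :
    α ^ hitTimeMin A Bs ξ ω = ∑' n, (firstOccAt A Bs ξ n).indicator (fun _ => α ^ n) ω := by
  rw [tsum_eq_single (hitTimeMin A Bs ξ ω) fun n hn =>
      Set.indicator_of_notMem (mt (hitTimeMin_eq_iff h n).mpr (Ne.symm hn)) _,
    Set.indicator_of_mem ((hitTimeMin_eq_iff h _).mp rfl)]

end HittingTime

section Series

variable {Ω : Type*} [MeasurableSpace Ω] {μ : Measure Ω} {α : ℝ}

lemma summable_pow_mul_measureReal [IsFiniteMeasure μ] (hα0 : 0 ≤ α) (hα1 : α < 1)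
    (s : ℕ → Set Ω) : Summable fun n => α ^ n * μ.real (s n) :=
  ((summable_geometric_of_lt_one hα0 hα1).mul_right (μ.real Set.univ)).of_nonneg_of_le
    (fun n => by positivity) fun n =>
      mul_le_mul_of_nonneg_left (measureReal_mono (Set.subset_univ _)) (by positivity)

lemma integral_tsum_indicator_pow [IsFiniteMeasure μ] (hα0 : 0 ≤ α) (hα1 : α < 1)
    {s : ℕ → Set Ω} (hs : ∀ n, MeasurableSet (s n)) :
    ∫ ω, ∑' n, (s n).indicator (fun _ => α ^ n) ω ∂μ = ∑' n, α ^ n * μ.real (s n) := by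
  have hint : ∀ n, ∫ ω, (s n).indicator (fun _ => α ^ n) ω ∂μ = α ^ n * μ.real (s n) := fun n => by
    rw [integral_indicator_const _ (hs n), smul_eq_mul, mul_comm]
  have hnorm : ∀ n ω, ‖(s n).indicator (fun _ => α ^ n) ω‖ = (s n).indicator (fun _ => α ^ n) ω :=
    fun n ω => Real.norm_of_nonneg (Set.indicator_nonneg (fun _ _ => pow_nonneg hα0 n) ω)
  rw [← integral_tsum_of_summable_integral_norm (fun n => (integrable_const _).indicator (hs n))]
  · exact tsum_congr hint
  · simpa only [hnorm, hint] using summable_pow_mul_measureReal hα0 hα1 s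

lemma hasSum_pow_mul_of_eq_sub {V : ℝ} {v w : ℕ → ℝ} (hv : HasSum (fun n => α ^ n * v n) V)
    (hw0 : w 0 = 1 - v 0) (hw : ∀ n, w (n + 1) = v n - v (n + 1)) :
    HasSum (fun n => α ^ n * w n) (1 - (1 - α) * V) := by
  rw [← hasSum_nat_add_iff' 1]
  have hshift : HasSum (fun n => α ^ (n + 1) * v (n + 1)) (V - v 0) := by
    simpa using (hasSum_nat_add_iff' 1).mpr hv
  convert (hv.mul_left α).sub hshift using 1
  · funext n; rw [hw]; ring
  · simp [hw0]; ring

lemma hasSum_of_add_succ_eq {G V c : ℕ → ℝ} {a C : ℝ} (hG : ∀ n, 0 ≤ G n) (h0 : G 0 + V 0 = a)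
    (hstep : ∀ n, V (n + 1) + G (n + 1) = c n + V n) (hV : Tendsto V atTop (𝓝 0))
    (hc : HasSum c C) : HasSum G (a + C) := by
  have hpartial : ∀ N, ∑ n ∈ range (N + 1), G n = a + ∑ n ∈ range N, c n - V N := by
    intro N
    induction N with
    | zero => simp; linarith
    | succ N ih => rw [sum_range_succ, ih, sum_range_succ]; linarith [hstep N]
  rw [hasSum_iff_tendsto_nat_of_nonneg hG, ← tendsto_add_atTop_iff_nat 1, funext hpartial]
  simpa using (tendsto_const_nhds.add hc.tendsto_sum_nat).sub hV

end Series

section TeamCapital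

variable {S Ω : Type*} [MeasurableSpace Ω] {μ : Measure Ω} {ξ : ℕ → Ω → S} {p : S → ℝ}
  {A : List S} {α : ℝ}

/-- The expected capital on `E`, discounted by `α ^ n`, of a team of gamblers betting on `B`:
the gambler who joined `k` rounds ago and has won every bet so far holds `1 / (Pr(B_{(k)}) α^k)`. -/
noncomputable def teamCapital (μ : Measure Ω) (p : S → ℝ) (A : List S) (ξ : ℕ → Ω → S)
    (B : List S) (α : ℝ) (n : ℕ) (E : Set Ω) : ℝ :=
  α ^ n * ∑ k ∈ Icc 1 B.length,
    μ.real (E ∩ prefixMatch A ξ B n k) / (patProb p (B.take k) * α ^ k)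

variable {B : List S} {n : ℕ}

lemma teamCapital_nonneg (hp : ∀ a, 0 < p a) (hα : 0 < α) (E : Set Ω) :
    0 ≤ teamCapital μ p A ξ B α n E :=
  mul_nonneg (pow_nonneg hα.le n) (sum_nonneg fun k _ =>
    div_nonneg measureReal_nonneg (mul_pos (patProb_pos hp _) (pow_pos hα k)).le)

lemma teamCapital_le [IsProbabilityMeasure μ] (hp : ∀ a, 0 < p a) (hα : 0 < α) (E : Set Ω) :
    teamCapital μ p A ξ B α n E ≤
      α ^ n * ∑ k ∈ Icc 1 B.length, 1 / (patProb p (B.take k) * α ^ k) :=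
  mul_le_mul_of_nonneg_left (sum_le_sum fun k _ => div_le_div_of_nonneg_right measureReal_le_one
    (mul_pos (patProb_pos hp _) (pow_pos hα k)).le) (pow_nonneg hα.le n)

lemma tendsto_teamCapital_atTop [IsProbabilityMeasure μ] (hp : ∀ a, 0 < p a) (hα0 : 0 < α)
    (hα1 : α < 1) (E : ℕ → Set Ω) :
    Tendsto (fun n => teamCapital μ p A ξ B α n (E n)) atTop (𝓝 0) :=
  squeeze_zero (fun _ => teamCapital_nonneg hp hα0 _) (fun _ => teamCapital_le hp hα0 _) <| by
    simpa using (tendsto_pow_atTop_nhds_zero_of_lt_one hα0.le hα1).mul_const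
      (∑ k ∈ Icc 1 B.length, 1 / (patProb p (B.take k) * α ^ k))

variable [DecidableEq S]

lemma teamCapital_of_isSuffix {C : List S} {E : Set Ω} (hE : ∀ ω ∈ E, C <:+ obsWord A ξ n ω)
    (hCB : C <:+: B → C = B) :
    teamCapital μ p A ξ B α n E = corr p C B α * (α ^ n * μ.real E) := by
  rw [teamCapital, corr_eq_sum_Icc_length, sum_mul, mul_sum]
  refine sum_congr rfl fun k hk => ?_
  rw [inter_prefixMatch_of_isSuffix hE hCB (mem_Icc.mp hk).2]
  split_ifs
  · ring
  · simp

lemma teamCapital_zero_univ [IsProbabilityMeasure μ] :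
    teamCapital μ p A ξ B α 0 Set.univ = corr p A B α := by
  rw [teamCapital, pow_zero, one_mul, corr_eq_sum_Icc_length]
  refine sum_congr rfl fun k _ => ?_
  rw [prefixMatch_zero_left, Set.univ_inter]
  split_ifs with h <;> simp [h]

end TeamCapital

section TeamCapitalMartingale

variable {S Ω : Type*} [MeasurableSpace S] [Countable S] [MeasurableSingletonClass S]
  [MeasurableSpace Ω] {μ : Measure Ω} {ξ : ℕ → Ω → S} {p : S → ℝ} {A : List S} {α : ℝ}
  {B : List S} {n : ℕ}

lemma teamCapital_union [IsFiniteMeasure μ] (hmeas : ∀ n, Measurable (ξ n)) {E F : Set Ω}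
    (hEF : Disjoint E F) (hF : MeasurableSet F) :
    teamCapital μ p A ξ B α n (E ∪ F) =
      teamCapital μ p A ξ B α n E + teamCapital μ p A ξ B α n F := by
  simp only [teamCapital, ← mul_add, ← sum_add_distrib, ← add_div, Set.union_inter_distrib_right]
  refine congrArg _ (sum_congr rfl fun k _ => ?_)
  rw [measureReal_union (hEF.mono Set.inter_subset_left Set.inter_subset_left)
    (hF.inter (measurableSet_prefixMatch hmeas A B n k))]

lemma teamCapital_iUnion [IsFiniteMeasure μ] (hmeas : ∀ n, Measurable (ξ n)) {ι : Type*}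
    [Fintype ι] {E : ι → Set Ω} (hE : Pairwise fun i j => Disjoint (E i) (E j))
    (hEm : ∀ i, MeasurableSet (E i)) :
    teamCapital μ p A ξ B α n (⋃ i, E i) = ∑ i, teamCapital μ p A ξ B α n (E i) := by
  simp only [teamCapital, ← mul_sum, Set.iUnion_inter]
  rw [sum_comm]
  refine congrArg _ (sum_congr rfl fun k _ => ?_)
  rw [← sum_div, measureReal_iUnion_fintype
    (fun i j hij => (hE hij).mono Set.inter_subset_left Set.inter_subset_left)
    (fun i => (hEm i).inter (measurableSet_prefixMatch hmeas A B n k))]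

/-- The bets are fair: as long as no gambler has completed `B` on `E`, one more round adds the
stake `αⁿ` of a new gambler and leaves the expected capital of the others unchanged. -/
lemma teamCapital_succ (hmeas : ∀ n, Measurable (ξ n)) (hindep : iIndepFun ξ μ)
    (hlaw : ∀ n a, μ.real (ξ n ⁻¹' {a}) = p a) (hp : ∀ a, 0 < p a) (hα : α ≠ 0)
    (U : Set (Fin n → S)) (hU : prefixTuple ξ n ⁻¹' U ∩ prefixMatch A ξ B n B.length = ∅) :
    teamCapital μ p A ξ B α (n + 1) (prefixTuple ξ n ⁻¹' U) =
      α ^ n * μ.real (prefixTuple ξ n ⁻¹' U) +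
        teamCapital μ p A ξ B α n (prefixTuple ξ n ⁻¹' U) := by
  set E := prefixTuple ξ n ⁻¹' U
  set f : ℕ → ℝ := fun k => μ.real (E ∩ prefixMatch A ξ B n k) / (patProb p (B.take k) * α ^ k)
  have hbet : ∀ k ∈ range B.length, μ.real (E ∩ prefixMatch A ξ B (n + 1) (k + 1)) /
      (patProb p (B.take (k + 1)) * α ^ (k + 1)) = f k / α := by
    intro k hk
    have hk : k < B.length := mem_range.mp hk
    have hcyl : E ∩ prefixMatch A ξ B n k =
        prefixTuple ξ n ⁻¹' (U ∩ {v | lastK (A ++ List.ofFn v) k = B.take k}) := rfl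
    have hpos := patProb_pos hp (B.take k)
    rw [prefixMatch_succ hk, ← Set.inter_assoc, hcyl,
      measureReal_preimage_prefixTuple_inter_letter hmeas hindep hlaw, ← hcyl,
      List.take_add_one, List.getElem?_eq_getElem hk, Option.toList_some, patProb,
      List.map_append, List.prod_append, ← patProb]
    simp only [f, List.map_cons, List.map_nil, List.prod_cons, List.prod_nil, mul_one]
    field_simp [(hp B[k]).ne', hpos.ne']
    ring
  have hf0 : f 0 = μ.real E := by simp [f, prefixMatch_zero_right, patProb]
  have hfL : f B.length = 0 := by simp [f, hU]
  have hshift := sum_range_succ' f B.length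
  rw [sum_range_succ, hfL, add_zero, ← sum_Icc_one_eq_sum_range] at hshift
  rw [teamCapital, sum_Icc_one_eq_sum_range, sum_congr rfl hbet, ← sum_div, hshift, hf0,
    teamCapital]
  field_simp
  ring

end TeamCapitalMartingale

section PatternGame

variable {S Ω : Type*} [MeasurableSpace S] [Countable S]
  [MeasurableSingletonClass S] [MeasurableSpace Ω] {μ : Measure Ω} [IsProbabilityMeasure μ]
  {ξ : ℕ → Ω → S} {p : S → ℝ} {A : List S} {m : ℕ} {Bs : Fin m → List S} {α : ℝ}

lemma measureReal_firstOccAt (hmeas : ∀ n, Measurable (ξ n))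
    (hsub : ∀ i j, i ≠ j → ¬ Bs i <:+: Bs j) (hBA : ∀ i, ¬ Bs i <:+: A.dropLast) (n : ℕ) :
    μ.real (firstOccAt A Bs ξ n) = ∑ i, μ.real (winsAt A Bs ξ i n) := by
  rw [← iUnion_winsAt, measureReal_iUnion_fintype (pairwise_disjoint_winsAt hsub hBA n)
    (measurableSet_winsAt hmeas A Bs · n)]

lemma hasSum_measureReal_firstOccAt (hmeas : ∀ n, Measurable (ξ n)) (hα0 : 0 ≤ α)
    (hα1 : α < 1) :
    HasSum (fun n => α ^ n * μ.real (firstOccAt A Bs ξ n))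
      (1 - (1 - α) * ∑' n, α ^ n * μ.real (someOccurs A Bs ξ n)ᶜ) := by
  refine hasSum_pow_mul_of_eq_sub (summable_pow_mul_measureReal hα0 hα1 _).hasSum ?_ fun n => ?_
  · rw [probReal_compl_eq_one_sub (measurableSet_someOccurs hmeas A Bs 0), sub_sub_cancel]
    rfl
  · rw [probReal_compl_eq_one_sub (measurableSet_someOccurs hmeas A Bs _),
      probReal_compl_eq_one_sub (measurableSet_someOccurs hmeas A Bs _), sub_sub_sub_cancel_left,
      firstOccAt, measureReal_sdiff (someOccurs_mono n.le_succ)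
        (measurableSet_someOccurs hmeas A Bs n)]

lemma integral_pow_hitTimeMin [Nonempty (Fin m)] (hmeas : ∀ n, Measurable (ξ n))
    (hindep : iIndepFun ξ μ) (hlaw : ∀ n a, μ.real (ξ n ⁻¹' {a}) = p a) (hp : ∀ a, 0 < p a)
    (hα0 : 0 ≤ α) (hα1 : α < 1) :
    ∫ ω, α ^ hitTimeMin A Bs ξ ω ∂μ = ∑' n, α ^ n * μ.real (firstOccAt A Bs ξ n) := by
  rw [← integral_tsum_indicator_pow hα0 hα1 (measurableSet_firstOccAt hmeas A Bs)]
  exact integral_congr_ae ((ae_forall_exists_isInfix_obsWord hmeas hindep hlaw hp A Bs).mono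
    fun _ h => pow_hitTimeMin_eq_tsum h α)

lemma sum_tsum_measureReal_winsAt (hmeas : ∀ n, Measurable (ξ n))
    (hsub : ∀ i j, i ≠ j → ¬ Bs i <:+: Bs j) (hBA : ∀ i, ¬ Bs i <:+: A.dropLast) (hα0 : 0 ≤ α)
    (hα1 : α < 1) :
    ∑ i, ∑' n, α ^ n * μ.real (winsAt A Bs ξ i n) =
      1 - (1 - α) * ∑' n, α ^ n * μ.real (someOccurs A Bs ξ n)ᶜ :=
  (hasSum_sum fun _ _ => (summable_pow_mul_measureReal hα0 hα1 _).hasSum).unique <| by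
    simpa only [measureReal_firstOccAt hmeas hsub hBA, mul_sum] using
      hasSum_measureReal_firstOccAt (μ := μ) (A := A) (Bs := Bs) hmeas hα0 hα1

lemma QGF_eq_tsum [Nonempty (Fin m)] (hmeas : ∀ n, Measurable (ξ n)) (hindep : iIndepFun ξ μ)
    (hlaw : ∀ n a, μ.real (ξ n ⁻¹' {a}) = p a) (hp : ∀ a, 0 < p a) (hα0 : 0 ≤ α) (hα1 : α < 1) :
    QGF μ A Bs ξ α = ∑' n, α ^ n * μ.real (someOccurs A Bs ξ n)ᶜ := by
  rw [QGF, integral_pow_hitTimeMin hmeas hindep hlaw hp hα0 hα1,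
    (hasSum_measureReal_firstOccAt hmeas hα0 hα1).tsum_eq]
  field_simp [(sub_pos.mpr hα1).ne']
  ring

variable [DecidableEq S]

lemma hasSum_teamCapital_firstOccAt (hmeas : ∀ n, Measurable (ξ n)) (hindep : iIndepFun ξ μ)
    (hlaw : ∀ n a, μ.real (ξ n ⁻¹' {a}) = p a) (hp : ∀ a, 0 < p a) (hα0 : 0 < α) (hα1 : α < 1)
    (j : Fin m) :
    HasSum (fun n => teamCapital μ p A ξ (Bs j) α n (firstOccAt A Bs ξ n))
      (corr p A (Bs j) α + ∑' n, α ^ n * μ.real (someOccurs A Bs ξ n)ᶜ) := by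
  refine hasSum_of_add_succ_eq
    (V := fun n => teamCapital μ p A ξ (Bs j) α n (someOccurs A Bs ξ n)ᶜ)
    (fun _ => teamCapital_nonneg hp hα0 _) ?_ (fun n => ?_) (tendsto_teamCapital_atTop hp hα0 hα1 _)
    (summable_pow_mul_measureReal hα0.le hα1 _).hasSum
  · show teamCapital μ p A ξ (Bs j) α 0 (someOccurs A Bs ξ 0) + _ = _
    rw [← teamCapital_union hmeas disjoint_compl_right
      (measurableSet_someOccurs hmeas A Bs 0).compl, Set.union_compl_self, teamCapital_zero_univ]
  · have hdisj : Disjoint (someOccurs A Bs ξ (n + 1))ᶜ (firstOccAt A Bs ξ (n + 1)) :=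
      Set.disjoint_compl_left_iff_subset.mpr (firstOccAt_subset_someOccurs _)
    rw [← teamCapital_union hmeas hdisj (measurableSet_firstOccAt hmeas A Bs _),
      ← compl_someOccurs_eq_union]
    exact teamCapital_succ hmeas hindep hlaw hp hα0.ne' {v | ¬ ∃ i, Bs i <:+: A ++ List.ofFn v}
      (Set.eq_empty_of_forall_notMem fun ω ⟨hω, hm⟩ =>
        hω (prefixMatch_length_subset_someOccurs j n hm))

lemma teamCapital_firstOccAt (hmeas : ∀ n, Measurable (ξ n))
    (hsub : ∀ i j, i ≠ j → ¬ Bs i <:+: Bs j) (hBA : ∀ i, ¬ Bs i <:+: A.dropLast) (j : Fin m)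
    (n : ℕ) :
    teamCapital μ p A ξ (Bs j) α n (firstOccAt A Bs ξ n) =
      ∑ i, corr p (Bs i) (Bs j) α * (α ^ n * μ.real (winsAt A Bs ξ i n)) := by
  rw [← iUnion_winsAt, teamCapital_iUnion hmeas (pairwise_disjoint_winsAt hsub hBA n)
    (measurableSet_winsAt hmeas A Bs · n)]
  refine sum_congr rfl fun i _ => teamCapital_of_isSuffix
    (fun _ hω => isSuffix_of_mem_winsAt hBA hω) fun h => ?_
  by_cases hij : i = j
  · rw [hij]
  · exact absurd h (hsub i j hij)

lemma sum_corr_mul_tsum_measureReal_winsAt (hmeas : ∀ n, Measurable (ξ n))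
    (hindep : iIndepFun ξ μ) (hlaw : ∀ n a, μ.real (ξ n ⁻¹' {a}) = p a) (hp : ∀ a, 0 < p a)
    (hsub : ∀ i j, i ≠ j → ¬ Bs i <:+: Bs j) (hBA : ∀ i, ¬ Bs i <:+: A.dropLast) (hα0 : 0 < α)
    (hα1 : α < 1) (j : Fin m) :
    ∑ i, corr p (Bs i) (Bs j) α * ∑' n, α ^ n * μ.real (winsAt A Bs ξ i n) =
      corr p A (Bs j) α + ∑' n, α ^ n * μ.real (someOccurs A Bs ξ n)ᶜ :=
  (hasSum_sum fun _ _ => (summable_pow_mul_measureReal hα0.le hα1 _).hasSum.mul_left _).unique <| by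
    simpa only [teamCapital_firstOccAt hmeas hsub hBA] using
      hasSum_teamCapital_firstOccAt (A := A) (Bs := Bs) hmeas hindep hlaw hp hα0 hα1 j

end PatternGame

namespace Matrix

lemma det_updateCol_mulVec {n R : Type*} [Fintype n] [DecidableEq n] [CommRing R]
    (M : Matrix n n R) (x : n → R) (k : n) : (M.updateCol k (M *ᵥ x)).det = M.det * x k := by
  rw [← Matrix.cramer_apply, Matrix.cramer_eq_adjugate_mulVec, Matrix.mulVec_mulVec,
    Matrix.adjugate_mul, Matrix.smul_mulVec, Matrix.one_mulVec, Pi.smul_apply, smul_eq_mul]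

lemma det_mul_sum_eq_of_mulVec_eq {n R : Type*} [Fintype n] [DecidableEq n] [CommRing R]
    {M : Matrix n n R} {x c : n → R} {q : R} (h : M *ᵥ x = c + q • fun _ => 1) :
    M.det * ∑ k, x k =
      ∑ k, (M.updateCol k c).det + q * ∑ k, (M.updateCol k fun _ => 1).det := by
  simp only [mul_sum, ← M.det_updateCol_mulVec, h, Matrix.det_updateCol_add,
    Matrix.det_updateCol_smul, sum_add_distrib]

end Matrix

theorem QGF_eq_det_ratio_general
    {S : Type*} [Fintype S] [DecidableEq S] [MeasurableSpace S] [MeasurableSingletonClass S]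
    {Ω : Type*} [MeasurableSpace Ω] (μ : Measure Ω) [IsProbabilityMeasure μ]
    (p : S → ℝ) (hp : ∀ a, 0 < p a)
    (ξ : ℕ → Ω → S) (hmeas : ∀ n, Measurable (ξ n))
    (hindep : iIndepFun ξ μ)
    (hdist : ∀ n a, μ {ω | ξ n ω = a} = ENNReal.ofReal (p a))
    (A : List S) {m : ℕ} (Bs : Fin m → List S)
    (hsub : ∀ i j, i ≠ j → ¬ Bs i <:+: Bs j)
    (hBA : ∀ i, ¬ Bs i <:+: A.dropLast)
    (hfin : μ {ω | ∃ k, ∃ i, Bs i <:+: obsWord A ξ k ω} = 1)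
    (α : ℝ) (hα0 : 0 < α) (hα1 : α < 1)
    (hden : (1 - α) * (corrMat p Bs α).det +
      ∑ j : Fin m, ((corrMat p Bs α).updateCol j fun _ => (1 : ℝ)).det ≠ 0) :
    QGF μ A Bs ξ α =
      ((corrMat p Bs α).det -
          ∑ k : Fin m, ((corrMat p Bs α).updateCol k (corrCol p A Bs α)).det) /
        ((1 - α) * (corrMat p Bs α).det +
          ∑ j : Fin m, ((corrMat p Bs α).updateCol j fun _ => (1 : ℝ)).det) := by
  have : Nonempty (Fin m) := by
    by_contra hm
    simp [not_nonempty_iff.mp hm] at hfin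
  have hlaw : ∀ n a, μ.real (ξ n ⁻¹' {a}) = p a := fun n a =>
    (congrArg ENNReal.toReal (hdist n a)).trans (ENNReal.toReal_ofReal (hp a).le)
  set x : Fin m → ℝ := fun i => ∑' n, α ^ n * μ.real (winsAt A Bs ξ i n)
  set Q := ∑' n, α ^ n * μ.real (someOccurs A Bs ξ n)ᶜ
  have hMx : (corrMat p Bs α).mulVec x = corrCol p A Bs α + Q • fun _ => 1 := funext fun j => by
    simpa [Matrix.mulVec, dotProduct, corrMat, corrCol] using
      sum_corr_mul_tsum_measureReal_winsAt hmeas hindep hlaw hp hsub hBA hα0 hα1 j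
  have hdet := Matrix.det_mul_sum_eq_of_mulVec_eq hMx
  rw [sum_tsum_measureReal_winsAt hmeas hsub hBA hα0.le hα1] at hdet
  rw [QGF_eq_tsum hmeas hindep hlaw hp hα0.le hα1, eq_div_iff hden]
  linear_combination -hdet

/-- For every `0 < α < 1` with `(1-α)·det 𝓑(α) + ∑_j det 𝓑^j(α) ≠ 0`,
`Q_τ(α) = (det 𝓑(α) − ∑_k det 𝓑_k(α)) / ((1-α)·det 𝓑(α) + ∑_j det 𝓑^j(α))`. -/
theorem QGF_eq_det_ratio
    {S : Type*} [Fintype S] [DecidableEq S] [MeasurableSpace S] [MeasurableSingletonClass S]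
    {Ω : Type*} [MeasurableSpace Ω] (μ : Measure Ω) [IsProbabilityMeasure μ]
    (p : S → ℝ) (hp : ∀ a, 0 < p a) (hpsum : ∑ a, p a = 1)
    (ξ : ℕ → Ω → S) (hmeas : ∀ n, Measurable (ξ n))
    (hindep : iIndepFun ξ μ)
    (hdist : ∀ n a, μ {ω | ξ n ω = a} = ENNReal.ofReal (p a))
    (A : List S) (hA : A ≠ []) {m : ℕ} (Bs : Fin m → List S) (hBs : ∀ i, Bs i ≠ [])
    (hsub : ∀ i j, i ≠ j → ¬ Bs i <:+: Bs j)
    (hBA : ∀ i, ¬ Bs i <:+: A.dropLast)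
    (hfin : μ {ω | ∃ k, ∃ i, Bs i <:+: obsWord A ξ k ω} = 1)
    (α : ℝ) (hα0 : 0 < α) (hα1 : α < 1)
    (hden : (1 - α) * (corrMat p Bs α).det +
      ∑ j : Fin m, ((corrMat p Bs α).updateCol j fun _ => (1 : ℝ)).det ≠ 0) :
    QGF μ A Bs ξ α =
      ((corrMat p Bs α).det -
          ∑ k : Fin m, ((corrMat p Bs α).updateCol k (corrCol p A Bs α)).det) /
        ((1 - α) * (corrMat p Bs α).det +
          ∑ j : Fin m, ((corrMat p Bs α).updateCol j fun _ => (1 : ℝ)).det) :=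
  QGF_eq_det_ratio_general μ p hp ξ hmeas hindep hdist A Bs hsub hBA hfin α hα0 hα1 hden
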